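/- arXiv:1708.05395 — 2 statements merged into one kernel-verified Lean document; each statement's English description precedes it below -/
import Mathlib

section
/- Suppose additionally that y >= sqrt(1 - (x - 1/2)^2) + 3*sqrt(3)/2 (region R4_4). Then the optimal radius for packings of 4 equal circles satisfies r_4(x,y) = 1/2. -/
/-!
A packing on the torus with one circle of radius `r` already needs `2r ≤ ‖v₁‖ = 1`, so
`r_k ≤ 1/2` for every `k ≥ 1`. Conversely, the four points `(0,0), (1/2, √3/2), (0, √3), (1/2, 3√3/2)`
of the unit hexagonal lattice give a packing of radius `1/2`: their differences are hexagonal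
lattice vectors `a(1,0) + b(1/2, √3/2)` with `|b| ≤ 3`, and a translate by `n v₂` with `n ≠ 0`
is pushed vertically out of the unit disc once `y ≥ √(1 - (x - 1/2)²) + 3√3/2`. The only tight
case is `b = ∓3`, `n = ±1`, where the vertical gap is at least `√(1 - (x - 1/2)²)` and the
horizontal offset is at least `|x - 1/2|`.
-/

noncomputable section

/-- The point `(a, b)` in the Euclidean plane. -/
def pt (a b : ℝ) : EuclideanSpace ℝ (Fin 2) :=
  (WithLp.equiv 2 (Fin 2 → ℝ)).symm ![a, b]

/-- The lattice generated by `v1 = (1,0)` and `v2 = (x,y)`. -/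
def TLat (x y : ℝ) : Set (EuclideanSpace ℝ (Fin 2)) :=
  {v | ∃ m n : ℤ, v = (m : ℝ) • pt 1 0 + (n : ℝ) • pt x y}

/-- `p` is a packing of `k` equal circles of radius `r` on the flat torus `ℝ²/Λ(x,y)`. -/
def IsPacking (x y : ℝ) {k : ℕ} (r : ℝ) (p : Fin k → EuclideanSpace ℝ (Fin 2)) : Prop :=
  ∀ i j : Fin k, ∀ l ∈ TLat x y, (i ≠ j ∨ l ≠ 0) → 2 * r ≤ ‖p i - p j + l‖

/-- The optimal (supremal) radius for packings of `k` equal circles on the torus `ℝ²/Λ(x,y)`. -/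
def optRadius (x y : ℝ) (k : ℕ) : ℝ :=
  sSup {r : ℝ | 0 ≤ r ∧ ∃ p : Fin k → EuclideanSpace ℝ (Fin 2), IsPacking x y r p}

open Real

lemma norm_pt (a b : ℝ) : ‖pt a b‖ = √(a ^ 2 + b ^ 2) := by
  simp [EuclideanSpace.norm_eq, Fin.sum_univ_two, pt, sq_abs]

lemma one_le_norm_pt {a b : ℝ} (h : 1 ≤ a ^ 2 + b ^ 2) : 1 ≤ ‖pt a b‖ := by
  rwa [norm_pt, one_le_sqrt]

lemma pt_one_zero_ne_zero : pt 1 0 ≠ 0 := by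
  intro h
  simpa [pt] using congrArg (fun v => v 0) h

lemma one_le_sq_add_sq_of_one_le {u v : ℝ} (hv : 1 ≤ v) : 1 ≤ u ^ 2 + v ^ 2 := by
  nlinarith [sq_nonneg u]

lemma Int.one_le_sq_add_mul_add_sq {a b : ℤ} (h : a ≠ 0 ∨ b ≠ 0) : 1 ≤ a ^ 2 + a * b + b ^ 2 := by
  have hpos : 0 < a ^ 2 + a * b + b ^ 2 := by
    rcases h with h | h
    · nlinarith [sq_pos_of_ne_zero h, sq_nonneg (a + 2 * b)]
    · nlinarith [sq_pos_of_ne_zero h, sq_nonneg (2 * a + b)]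
  linarith

lemma one_le_hexagonal_normSq {a b : ℤ} (h : a ≠ 0 ∨ b ≠ 0) :
    1 ≤ ((a : ℝ) + b / 2) ^ 2 + (b * √3 / 2) ^ 2 := by
  have h3 : √3 ^ 2 = 3 := sq_sqrt (by norm_num)
  have hab : (1 : ℝ) ≤ (a : ℝ) ^ 2 + a * b + b ^ 2 := by
    exact_mod_cast Int.one_le_sq_add_mul_add_sq h
  nlinarith

lemma sq_le_sq_int_add {t : ℝ} (ht : |t| ≤ 1 / 2) (k : ℤ) : t ^ 2 ≤ (k + t) ^ 2 := by
  obtain ⟨ht₁, ht₂⟩ := abs_le.mp ht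
  have hk : 0 ≤ (k : ℝ) * (k + 2 * t) := by
    obtain hk | rfl | hk : k ≤ -1 ∨ k = 0 ∨ 1 ≤ k := by omega
    · have : (k : ℝ) ≤ -1 := by exact_mod_cast hk
      nlinarith
    · simp
    · have : (1 : ℝ) ≤ k := by exact_mod_cast hk
      nlinarith
  nlinarith

section Region

variable {x y : ℝ} (hx0 : 0 ≤ x) (hx1 : x ≤ 1 / 2)
  (hreg : √(1 - (x - 1 / 2) ^ 2) + 3 * √3 / 2 ≤ y)
include hx0 hx1 hreg

lemma one_le_normSq_of_region_of_pos {a b n : ℤ} (hb : -3 ≤ b) (hn : 0 < n) :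
    1 ≤ ((a : ℝ) + b / 2 + n * x) ^ 2 + (b * √3 / 2 + n * y) ^ 2 := by
  set w := √(1 - (x - 1 / 2) ^ 2)
  have hw2 : w ^ 2 = 1 - (x - 1 / 2) ^ 2 := sq_sqrt (by nlinarith)
  have hw : √3 / 2 ≤ w := by
    rw [le_sqrt (by positivity) (by nlinarith), div_pow, sq_sqrt (by norm_num)]
    nlinarith
  have h3 : 1 ≤ √3 := one_le_sqrt.mpr (by norm_num)
  have hb' : (-3 : ℝ) ≤ b := by exact_mod_cast hb
  obtain rfl | hn2 : n = 1 ∨ 2 ≤ n := by omega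
  · obtain rfl | hb2 : b = -3 ∨ -2 ≤ b := by omega
    · push_cast
      have hv : w ≤ -3 * √3 / 2 + 1 * y := by linarith
      have hh : (x - 1 / 2) ^ 2 ≤ (a + -3 / 2 + 1 * x) ^ 2 :=
        calc (x - 1 / 2) ^ 2 ≤ (((a - 1 : ℤ) : ℝ) + (x - 1 / 2)) ^ 2 :=
              sq_le_sq_int_add (abs_le.mpr ⟨by linarith, by linarith⟩) _
          _ = _ := by push_cast; ring
      nlinarith [pow_le_pow_left₀ (sqrt_nonneg _) hv 2]
    · have hb2' : (-2 : ℝ) ≤ b := by exact_mod_cast hb2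
      refine one_le_sq_add_sq_of_one_le ?_
      push_cast
      nlinarith
  · have hn2' : (2 : ℝ) ≤ n := by exact_mod_cast hn2
    refine one_le_sq_add_sq_of_one_le ?_
    nlinarith

theorem one_le_normSq_of_region {a b n : ℤ} (hb : |b| ≤ 3) (h : a ≠ 0 ∨ b ≠ 0 ∨ n ≠ 0) :
    1 ≤ ((a : ℝ) + b / 2 + n * x) ^ 2 + (b * √3 / 2 + n * y) ^ 2 := by
  obtain ⟨hb₁, hb₂⟩ := abs_le.mp hb
  rcases lt_trichotomy n 0 with hn | rfl | hn
  · convert one_le_normSq_of_region_of_pos hx0 hx1 hreg (a := -a) (b := -b) (n := -n)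
      (by omega) (by omega) using 1
    push_cast
    ring
  · simpa using one_le_hexagonal_normSq (by simpa using h)
  · exact one_le_normSq_of_region_of_pos hx0 hx1 hreg (by omega) hn

end Region

/-- The zigzag column `(0,0), (1/2, √3/2), (0, √3), (1/2, 3√3/2), …` of the unit hexagonal
lattice. -/
def hexColumn (k : ℕ) (i : Fin k) : EuclideanSpace ℝ (Fin 2) :=
  pt ((i : ℝ) / 2 - (i / 2 : ℕ)) (i * √3 / 2)

lemma hexColumn_sub_add_lattice {k : ℕ} (x y : ℝ) (i j : Fin k) (m n : ℤ) :
    hexColumn k i - hexColumn k j + ((m : ℝ) • pt 1 0 + (n : ℝ) • pt x y) =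
      pt (((m - (i / 2 : ℕ) + (j / 2 : ℕ) : ℤ) : ℝ) + ((i - j : ℤ) : ℝ) / 2 + n * x)
        (((i - j : ℤ) : ℝ) * √3 / 2 + n * y) := by
  ext c
  fin_cases c <;> simp [hexColumn, pt, -Int.natCast_ediv] <;> ring

theorem isPacking_hexColumn {k : ℕ} (hk : k ≤ 4) {x y : ℝ} (hx0 : 0 ≤ x) (hx1 : x ≤ 1 / 2)
    (hreg : √(1 - (x - 1 / 2) ^ 2) + 3 * √3 / 2 ≤ y) :
    IsPacking x y (1 / 2) (hexColumn k) := by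
  rintro i j _ ⟨m, n, rfl⟩ hne
  rw [hexColumn_sub_add_lattice, mul_one_div_cancel two_ne_zero]
  refine one_le_norm_pt (one_le_normSq_of_region hx0 hx1 hreg
    (abs_le.mpr ⟨by omega, by omega⟩) ?_)
  by_contra! h
  obtain ⟨ha, hb, rfl⟩ := h
  obtain rfl : i = j := Fin.ext (by omega)
  obtain rfl : m = 0 := by omega
  simp at hne

lemma IsPacking.le_half {x y r : ℝ} {k : ℕ} {p : Fin k → EuclideanSpace ℝ (Fin 2)}
    (hp : IsPacking x y r p) (i : Fin k) : r ≤ 1 / 2 := by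
  have h := hp i i (pt 1 0) ⟨1, 0, by simp⟩ (Or.inr pt_one_zero_ne_zero)
  rw [sub_self, zero_add, norm_pt] at h
  norm_num at h
  linarith

theorem optRadius_eq_half {x y : ℝ} {k : ℕ} (hk : 0 < k) {p : Fin k → EuclideanSpace ℝ (Fin 2)}
    (hp : IsPacking x y (1 / 2) p) : optRadius x y k = 1 / 2 := by
  have hmem : (1 / 2 : ℝ) ∈
      {r : ℝ | 0 ≤ r ∧ ∃ p : Fin k → EuclideanSpace ℝ (Fin 2), IsPacking x y r p} :=
    ⟨by norm_num, p, hp⟩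
  have hub : ∀ r ∈ {r : ℝ | 0 ≤ r ∧ ∃ p : Fin k → EuclideanSpace ℝ (Fin 2), IsPacking x y r p},
      r ≤ 1 / 2 := fun _ ⟨_, _, hq⟩ => hq.le_half ⟨0, hk⟩
  exact le_antisymm (csSup_le ⟨_, hmem⟩ hub) (le_csSup ⟨_, hub⟩ hmem)

theorem four_circles_region_R4_general (x y : ℝ) (hx0 : 0 ≤ x) (hx1 : x ≤ 1 / 2)
    (hreg : Real.sqrt (1 - (x - 1 / 2) ^ 2) + 3 * Real.sqrt 3 / 2 ≤ y)
    : optRadius x y 4 = 1 / 2 :=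
  optRadius_eq_half (by norm_num) (isPacking_hexColumn le_rfl hx0 hx1 hreg)

theorem four_circles_region_R4 (x y : ℝ) (hxy : 1 ≤ x ^ 2 + y ^ 2) (hy : 0 < y) (hx0 : 0 ≤ x) (hx1 : x ≤ 1 / 2)
    (hreg : Real.sqrt (1 - (x - 1 / 2) ^ 2) + 3 * Real.sqrt 3 / 2 ≤ y)
    : optRadius x y 4 = 1 / 2 :=
  four_circles_region_R4_general x y hx0 hx1 hreg
end
end

section
/- Suppose additionally that y >= sqrt(1 - (x - 1/2)^2) + 3*sqrt(3)/2 (region R4_4). Then the configuration p : Fin 4 -> R^2 given by p 0 = (0,0), p 1 = (1/2, sqrt(3)/2), p 2 = (0, sqrt(3)), p 3 = (1/2, 3*sqrt(3)/2) is a packing of 4 equal circles of radius 1/2 on the flat torus R^2/Lambda; that is, ||p i - p j + lambda|| >= 1 for all i, j in Fin 4 and all lambda in Lambda with (i ≠ j or lambda ≠ 0). -/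
noncomputable section

/-!
The four centres form a column of the hexagonal packing with unit spacing.
Since the lattice is symmetric, it suffices to bound `‖p i - p j + l‖` for `j ≤ i`, where
`p i - p j = (a, b)` with `|a| ≤ 1/2` and `0 ≤ b ≤ 3√3/2`. Translates in the same row
(`l = m • v1`) keep the horizontal offset at least `|a|`, which suffices since `a² + b² ≥ 1`
for distinct centres; translates in other rows are at height at least `y - |b| ≥ 1`. The one
exception is `p 3 - p 0 - v2 = (1/2 - x, 3√3/2 - y)`, whose height is only bounded by
`√(1 - (x - 1/2)²)`: the defining inequality of the region makes its length at least `1`.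
-/

open Real

lemma pt_add_pt (a b c d : ℝ) : pt a b + pt c d = pt (a + c) (b + d) := by
  ext i; fin_cases i <;> simp [pt]

lemma pt_sub_pt (a b c d : ℝ) : pt a b - pt c d = pt (a - c) (b - d) := by
  ext i; fin_cases i <;> simp [pt]

lemma intCast_smul_pt_add (m n : ℤ) (x y : ℝ) :
    (m : ℝ) • pt 1 0 + (n : ℝ) • pt x y = pt (m + n * x) (n * y) := by
  ext i; fin_cases i <;> simp [pt]

lemma sq_le_sq_add_intCast {t : ℝ} (ht : |t| ≤ 1 / 2) (m : ℤ) : t ^ 2 ≤ (t + m) ^ 2 := by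
  obtain ⟨ht₁, ht₂⟩ := abs_le.mp ht
  rcases lt_trichotomy m 0 with hm | rfl | hm
  · have : (m : ℝ) ≤ -1 := by exact_mod_cast Int.le_sub_one_of_lt hm
    nlinarith
  · simp
  · have : (1 : ℝ) ≤ m := by exact_mod_cast hm
    nlinarith

lemma sub_abs_le_abs_add_intCast_mul {n : ℤ} (hn : n ≠ 0) {y : ℝ} (hy : 0 ≤ y) (b : ℝ) :
    y - |b| ≤ |b + n * y| := by
  have hn₁ : (1 : ℝ) ≤ |(n : ℝ)| := by exact_mod_cast Int.one_le_abs hn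
  calc y - |b| ≤ |(n : ℝ) * y| - |b| := by
        rw [abs_mul, abs_of_nonneg hy]; nlinarith
    _ ≤ |b + n * y| := by
        have := abs_sub_abs_le_abs_sub ((n : ℝ) * y) (-b)
        rwa [abs_neg, sub_neg_eq_add, add_comm] at this

lemma neg_mem_TLat {x y : ℝ} {l : EuclideanSpace ℝ (Fin 2)} (hl : l ∈ TLat x y) :
    -l ∈ TLat x y := by
  obtain ⟨m, n, rfl⟩ := hl
  exact ⟨-m, -n, by push_cast; rw [neg_smul, neg_smul, neg_add]⟩

lemma isPacking_of_forall_le {x y : ℝ} {k : ℕ} {r : ℝ} {p : Fin k → EuclideanSpace ℝ (Fin 2)}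
    (h : ∀ i j, j ≤ i → ∀ l ∈ TLat x y, (i ≠ j ∨ l ≠ 0) → 2 * r ≤ ‖p i - p j + l‖) :
    IsPacking x y r p := by
  intro i j l hl hne
  rcases le_total j i with hji | hij
  · exact h i j hji l hl hne
  · calc 2 * r ≤ ‖p j - p i + -l‖ :=
          h j i hij (-l) (neg_mem_TLat hl) (by rwa [ne_comm, neg_ne_zero])
      _ = ‖p i - p j + l‖ := by rw [← norm_neg]; congr 1; abel

section

variable {x y : ℝ} {l : EuclideanSpace ℝ (Fin 2)}

lemma one_le_norm_of_mem_TLat (hy : 1 ≤ y) (hl : l ∈ TLat x y) (hl0 : l ≠ 0) : 1 ≤ ‖l‖ := by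
  obtain ⟨m, n, rfl⟩ := hl
  rw [intCast_smul_pt_add]
  apply one_le_norm_pt
  obtain rfl | hn := eq_or_ne n 0
  · have hm : m ≠ 0 := by rintro rfl; simp at hl0
    have : (1 : ℝ) ≤ |(m : ℝ)| := by exact_mod_cast Int.one_le_abs hm
    simp only [Int.cast_zero, zero_mul, add_zero]
    nlinarith [abs_mul_abs_self (m : ℝ)]
  · have := sub_abs_le_abs_add_intCast_mul hn (by linarith) 0
    rw [abs_zero, zero_add] at this
    nlinarith [abs_mul_abs_self ((n : ℝ) * y), sq_nonneg ((m : ℝ) + n * x)]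

lemma one_le_norm_pt_add_of_mem_TLat {a b : ℝ} (ha : |a| ≤ 1 / 2) (hab : 1 ≤ a ^ 2 + b ^ 2)
    (hby : |b| + 1 ≤ y) (hl : l ∈ TLat x y) : 1 ≤ ‖pt a b + l‖ := by
  obtain ⟨m, n, rfl⟩ := hl
  rw [intCast_smul_pt_add, pt_add_pt]
  apply one_le_norm_pt
  obtain rfl | hn := eq_or_ne n 0
  · have := sq_le_sq_add_intCast ha m
    simp only [Int.cast_zero, zero_mul, add_zero]
    linarith
  · have := sub_abs_le_abs_add_intCast_mul hn (by linarith [abs_nonneg b]) b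
    nlinarith [abs_mul_abs_self (b + n * y), sq_nonneg (a + (m + n * x))]

lemma one_le_norm_pt_half_add_of_mem_TLat {b : ℝ} (hx0 : 0 ≤ x) (hx1 : x ≤ 1) (hb : 1 ≤ b)
    (hby : √(1 - (x - 1 / 2) ^ 2) + b ≤ y) (hb2 : b + 1 ≤ 2 * y) (hl : l ∈ TLat x y) :
    1 ≤ ‖pt (1 / 2) b + l‖ := by
  obtain ⟨m, n, rfl⟩ := hl
  rw [intCast_smul_pt_add, pt_add_pt]
  apply one_le_norm_pt
  have hσ := sqrt_nonneg (1 - (x - 1 / 2) ^ 2)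
  have hy : 0 ≤ y := by linarith
  obtain hn | rfl | hn : n ≤ -2 ∨ n = -1 ∨ 0 ≤ n := by omega
  · have : (n : ℝ) ≤ -2 := by exact_mod_cast hn
    have : b + n * y ≤ -1 := by nlinarith
    nlinarith [sq_nonneg (1 / 2 + (m + n * x))]
  · have hx : (1 / 2 + (m + (-1 : ℤ) * x)) = (1 / 2 - x) + m := by push_cast; ring
    have hfst := sq_le_sq_add_intCast (t := 1 / 2 - x) (abs_le.mpr ⟨by linarith, by linarith⟩) m
    have hσ2 := sq_sqrt (show 0 ≤ 1 - (x - 1 / 2) ^ 2 by nlinarith)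
    have hsnd : √(1 - (x - 1 / 2) ^ 2) ≤ -(b + ((-1 : ℤ) : ℝ) * y) := by push_cast; linarith
    rw [hx]
    nlinarith [mul_self_le_mul_self hσ hsnd]
  · have : (0 : ℝ) ≤ n := by exact_mod_cast hn
    nlinarith [sq_nonneg (1 / 2 + (m + n * x)), mul_nonneg this hy]

end

lemma sqrt_three_div_two_le_sqrt {x : ℝ} (hx0 : 0 ≤ x) (hx1 : x ≤ 1) :
    √3 / 2 ≤ √(1 - (x - 1 / 2) ^ 2) := by
  rw [le_sqrt (by positivity) (by nlinarith), div_pow, sq_sqrt (by norm_num)]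
  nlinarith

theorem four_circles_packing_R4_general (x y : ℝ) (hx0 : 0 ≤ x) (hx1 : x ≤ 1 / 2)
    (hreg : Real.sqrt (1 - (x - 1 / 2) ^ 2) + 3 * Real.sqrt 3 / 2 ≤ y)
    : IsPacking x y (1 / 2)
      ![pt 0 0, pt (1 / 2) (Real.sqrt 3 / 2), pt 0 (Real.sqrt 3),
        pt (1 / 2) (3 * Real.sqrt 3 / 2)] := by
  have hs : 1 ≤ √3 := one_le_sqrt.mpr (by norm_num)
  have hs3 : √3 ^ 2 = 3 := sq_sqrt (by norm_num)
  have hy : 2 * √3 ≤ y := by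
    linarith [sqrt_three_div_two_le_sqrt hx0 (by linarith : x ≤ 1)]
  refine isPacking_of_forall_le fun i j hji l hl hne => ?_
  rw [mul_one_div_cancel two_ne_zero]
  fin_cases i <;> fin_cases j <;> simp [pt_sub_pt] at hji hne ⊢
  all_goals first
    | exact one_le_norm_of_mem_TLat (by linarith) hl hne
    | simpa using one_le_norm_pt_half_add_of_mem_TLat (b := 3 * √3 / 2) hx0 (by linarith)
        (by linarith) (by linarith) (by linarith) hl
    | refine one_le_norm_pt_add_of_mem_TLat (by norm_num [abs_le]) (by nlinarith)
        (by rw [abs_of_nonneg (by linarith)]; linarith) hl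

theorem four_circles_packing_R4 (x y : ℝ) (hxy : 1 ≤ x ^ 2 + y ^ 2) (hy : 0 < y) (hx0 : 0 ≤ x) (hx1 : x ≤ 1 / 2)
    (hreg : Real.sqrt (1 - (x - 1 / 2) ^ 2) + 3 * Real.sqrt 3 / 2 ≤ y)
    : IsPacking x y (1 / 2)
      ![pt 0 0, pt (1 / 2) (Real.sqrt 3 / 2), pt 0 (Real.sqrt 3),
        pt (1 / 2) (3 * Real.sqrt 3 / 2)] :=
  four_circles_packing_R4_general x y hx0 hx1 hreg
end
end
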